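/- arXiv:0907.1440 — 3 statements merged into one kernel-verified Lean document; each statement's English description precedes it below -/
import Mathlib

section
/- Let n ≥ 1 and let u : ℝⁿ → ℝ be smooth with u > 0 everywhere. Set A := −Δu, w := log ∘ u, and Q := ‖∇w‖² + A·u⁻¹. Then pointwise on ℝⁿ: Δ(A·u⁻¹) = u⁻¹·ΔA − 2u⁻¹·⟨∇A, ∇w⟩ + A·u⁻¹·(2Q − A·u⁻¹). -/
open scoped BigOperators

/-- The gradient of `f : ℝⁿ → ℝ`. -/
noncomputable def egrad {n : ℕ} (f : EuclideanSpace ℝ (Fin n) → ℝ)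
    (x : EuclideanSpace ℝ (Fin n)) : EuclideanSpace ℝ (Fin n) := gradient f x

/-- The partial derivative of `f` in the `i`-th coordinate direction. -/
noncomputable def epd {n : ℕ} (i : Fin n) (f : EuclideanSpace ℝ (Fin n) → ℝ)
    (x : EuclideanSpace ℝ (Fin n)) : ℝ := fderiv ℝ f x (EuclideanSpace.single i 1)

/-- The Laplacian `Δf = ∑ᵢ ∂ᵢ∂ᵢ f` (trace of the Hessian). -/
noncomputable def elap {n : ℕ} (f : EuclideanSpace ℝ (Fin n) → ℝ)
    (x : EuclideanSpace ℝ (Fin n)) : ℝ := ∑ i, epd i (epd i f) x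

/-- The squared Hilbert–Schmidt norm `‖D²f‖²` of the Hessian of `f`. -/
noncomputable def ehess2 {n : ℕ} (f : EuclideanSpace ℝ (Fin n) → ℝ)
    (x : EuclideanSpace ℝ (Fin n)) : ℝ := ∑ i, ∑ j, (epd i (epd j f) x) ^ 2

section Aux

variable {n : ℕ}

lemma epd_contDiff (i : Fin n) {f : EuclideanSpace ℝ (Fin n) → ℝ} (hf : ContDiff ℝ (⊤ : ℕ∞) f) :
    ContDiff ℝ (⊤ : ℕ∞) (epd i f) := by
  have h : ContDiff ℝ (⊤ : ℕ∞) (fderiv ℝ f) := hf.fderiv_right (by simp)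
  exact h.clm_apply contDiff_const

lemma epd_add (i : Fin n) {f g : EuclideanSpace ℝ (Fin n) → ℝ}
    (hf : Differentiable ℝ f) (hg : Differentiable ℝ g) :
    epd i (fun y => f y + g y) = fun y => epd i f y + epd i g y := by
  funext x
  simp only [epd, fderiv_fun_add (hf x) (hg x)]
  simp

lemma epd_mul (i : Fin n) {f g : EuclideanSpace ℝ (Fin n) → ℝ}
    (hf : Differentiable ℝ f) (hg : Differentiable ℝ g) :
    epd i (fun y => f y * g y) = fun y => f y * epd i g y + g y * epd i f y := by
  funext x
  simp only [epd, fderiv_fun_mul (hf x) (hg x)]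
  simp [smul_eq_mul]

lemma epd_neg (i : Fin n) (f : EuclideanSpace ℝ (Fin n) → ℝ) :
    epd i (fun y => -(f y)) = fun y => -(epd i f y) := by
  funext x
  simp only [epd, fderiv_neg]
  simp

lemma epd_inv (i : Fin n) {f : EuclideanSpace ℝ (Fin n) → ℝ}
    (hf : Differentiable ℝ f) (h0 : ∀ x, f x ≠ 0) :
    epd i (fun y => (f y)⁻¹) = fun y => -((f y)⁻¹ * (f y)⁻¹) * epd i f y := by
  funext x
  have h : HasFDerivAt (fun y => (f y)⁻¹) ((-(f x ^ 2)⁻¹) • fderiv ℝ f x) x := by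
    have := (hasDerivAt_inv (h0 x)).comp_hasFDerivAt x (hf x).hasFDerivAt
    simpa [Function.comp_def] using this
  simp only [epd, h.fderiv]
  simp only [ContinuousLinearMap.smul_apply, smul_eq_mul, pow_two, mul_inv]

lemma epd_log (i : Fin n) {f : EuclideanSpace ℝ (Fin n) → ℝ}
    (hf : Differentiable ℝ f) (h0 : ∀ x, f x ≠ 0) :
    epd i (Real.log ∘ f) = fun y => (f y)⁻¹ * epd i f y := by
  funext x
  have h : HasFDerivAt (fun y => Real.log (f y)) ((f x)⁻¹ • fderiv ℝ f x) x :=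
    (hf x).hasFDerivAt.log (h0 x)
  have hcomp : Real.log ∘ f = fun y => Real.log (f y) := rfl
  simp only [epd, hcomp, h.fderiv]
  simp [smul_eq_mul]

lemma egrad_apply (f : EuclideanSpace ℝ (Fin n) → ℝ) (x : EuclideanSpace ℝ (Fin n)) (i : Fin n) :
    egrad f x i = epd i f x := by
  have h1 : (egrad f x) i =
      (inner ℝ (egrad f x) (EuclideanSpace.single i (1 : ℝ)) : ℝ) := by
    rw [EuclideanSpace.inner_single_right]
    simp
  rw [h1]
  simp only [egrad, gradient]
  rw [InnerProductSpace.toDual_symm_apply]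
  rfl

end Aux

/-- For a positive smooth solution `u` of `-Δu = A` on `ℝⁿ`,
with `w = log u` and `Q = ‖∇w‖² + A/u`, one has
`Δ(A·u⁻¹) = u⁻¹ΔA − 2u⁻¹⟨∇A, ∇w⟩ + A·u⁻¹·(2Q − A·u⁻¹)` pointwise. -/
theorem laplacian_Au_inv_identity (n : ℕ) (hn : 1 ≤ n)
    (u : EuclideanSpace ℝ (Fin n) → ℝ) (hu : ContDiff ℝ (⊤ : ℕ∞) u)
    (hpos : ∀ x, 0 < u x)
    (A : EuclideanSpace ℝ (Fin n) → ℝ) (hA : A = fun x => -(elap u x))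
    (w : EuclideanSpace ℝ (Fin n) → ℝ) (hw : w = Real.log ∘ u)
    (Q : EuclideanSpace ℝ (Fin n) → ℝ)
    (hQ : Q = fun x => ‖egrad w x‖ ^ 2 + A x * (u x)⁻¹) :
    ∀ x, elap (fun y => A y * (u y)⁻¹) x
      = (u x)⁻¹ * elap A x - 2 * (u x)⁻¹ * (inner ℝ (egrad A x) (egrad w x) : ℝ)
        + A x * (u x)⁻¹ * (2 * Q x - A x * (u x)⁻¹) := by
  intro x
  have hu' : Differentiable ℝ u := hu.differentiable (by simp)
  have hne : ∀ y, u y ≠ 0 := fun y => (hpos y).ne'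
  have hv' : Differentiable ℝ (fun y => (u y)⁻¹) := hu'.inv hne
  have hAcd : ContDiff ℝ (⊤ : ℕ∞) A := by
    rw [hA]
    have : ContDiff ℝ (⊤ : ℕ∞) (fun x => ∑ i, epd i (epd i u) x) :=
      ContDiff.sum fun i _ => epd_contDiff i (epd_contDiff i hu)
    exact this.neg
  have hA' : Differentiable ℝ A := hAcd.differentiable (by simp)
  have hpu' : ∀ i : Fin n, Differentiable ℝ (epd i u) :=
    fun i => (epd_contDiff i hu).differentiable (by simp)
  have hqA' : ∀ i : Fin n, Differentiable ℝ (epd i A) :=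
    fun i => (epd_contDiff i hAcd).differentiable (by simp)
  have hinv : ∀ i : Fin n, epd i (fun y => (u y)⁻¹)
      = fun y => -((u y)⁻¹ * (u y)⁻¹) * epd i u y := fun i => epd_inv i hu' hne
  have hwEq : ∀ i : Fin n, epd i w = fun y => (u y)⁻¹ * epd i u y := by
    intro i; rw [hw]; exact epd_log i hu' hne
  -- first derivative of A * u⁻¹
  have h1 : ∀ i : Fin n, epd i (fun y => A y * (u y)⁻¹)
      = fun y => A y * (-((u y)⁻¹ * (u y)⁻¹) * epd i u y) + (u y)⁻¹ * epd i A y := by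
    intro i
    rw [epd_mul i hA' hv', hinv i]
  -- second derivative, pointwise at x
  have h2 : ∀ i : Fin n, epd i (epd i (fun y => A y * (u y)⁻¹)) x
      = (u x)⁻¹ * epd i (epd i A) x
        + (-(2 * ((u x)⁻¹ * (u x)⁻¹))) * (epd i u x * epd i A x)
        + (2 * A x * ((u x)⁻¹ * ((u x)⁻¹ * (u x)⁻¹))) * (epd i u x * epd i u x)
        + (-(A x * ((u x)⁻¹ * (u x)⁻¹))) * epd i (epd i u) x := by
    intro i
    have hN : Differentiable ℝ (fun y => -((u y)⁻¹ * (u y)⁻¹)) := (hv'.mul hv').neg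
    have hS : Differentiable ℝ (fun y => -((u y)⁻¹ * (u y)⁻¹) * epd i u y) :=
      hN.mul (hpu' i)
    have hT1 : Differentiable ℝ (fun y => A y * (-((u y)⁻¹ * (u y)⁻¹) * epd i u y)) :=
      hA'.mul hS
    have hT2 : Differentiable ℝ (fun y => (u y)⁻¹ * epd i A y) := hv'.mul (hqA' i)
    rw [h1 i, epd_add i hT1 hT2, epd_mul i hA' hS, epd_mul i hN (hpu' i),
      epd_neg i (fun y => (u y)⁻¹ * (u y)⁻¹), epd_mul i hv' hv',
      epd_mul i hv' (hqA' i), hinv i]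
    ring
  have hLHS : elap (fun y => A y * (u y)⁻¹) x
      = ∑ i, ((u x)⁻¹ * epd i (epd i A) x
        + (-(2 * ((u x)⁻¹ * (u x)⁻¹))) * (epd i u x * epd i A x)
        + (2 * A x * ((u x)⁻¹ * ((u x)⁻¹ * (u x)⁻¹))) * (epd i u x * epd i u x)
        + (-(A x * ((u x)⁻¹ * (u x)⁻¹))) * epd i (epd i u) x) :=
    Finset.sum_congr rfl fun i _ => h2 i
  rw [hLHS]
  simp only [Finset.sum_add_distrib, ← Finset.mul_sum]
  -- inner product identity
  have hIP : (inner ℝ (egrad A x) (egrad w x) : ℝ)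
      = (u x)⁻¹ * ∑ i, epd i u x * epd i A x := by
    rw [Finset.mul_sum]
    rw [PiLp.inner_apply]
    refine Finset.sum_congr rfl fun i _ => ?_
    rw [egrad_apply, egrad_apply, hwEq i]
    simp only [RCLike.inner_apply, conj_trivial]
    ring
  -- norm identity
  have hNorm : ‖egrad w x‖ ^ 2
      = ((u x)⁻¹ * (u x)⁻¹) * ∑ i, epd i u x * epd i u x := by
    rw [← real_inner_self_eq_norm_sq, Finset.mul_sum, PiLp.inner_apply]
    refine Finset.sum_congr rfl fun i _ => ?_
    rw [egrad_apply, hwEq i]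
    simp only [RCLike.inner_apply, conj_trivial]
    ring
  -- trace identity from the equation
  have hr : ∑ i, epd i (epd i u) x = -(A x) := by
    rw [hA]
    simp [elap]
  have hlapA : elap A x = ∑ i, epd i (epd i A) x := rfl
  simp only [hQ]
  rw [hIP, hNorm, hlapA, hr]
  ring
end

section
/- Let n ≥ 1 and let u : ℝⁿ → ℝ be smooth, positive, and ℤⁿ-periodic (u(x + m) = u(x) for all x ∈ ℝⁿ and m ∈ ℤⁿ). Set A := −Δu, w := log ∘ u, and Q := ‖∇w‖² + A·u⁻¹. Then for every b > 0 and every x ∈ ℝⁿ: Q(x) ≤ max{ 2n·sup_{y∈ℝⁿ}( b − A(y)/u(y) ), √( n·sup_{y∈ℝⁿ} max( 0, A(y)²/u(y)² + ‖∇A(y)‖²/(2b·u(y)²) − 2b·A(y)/u(y) − ΔA(y)/u(y) ) ) }. (Both suprema are finite by periodicity and continuity.) -/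
open scoped BigOperators

namespace PoissonAux

variable {n : ℕ}

local notation "E" => EuclideanSpace ℝ (Fin n)

theorem diffAt {f : E → ℝ} (hf : ContDiff ℝ (⊤ : ℕ∞) f) (x : E) : DifferentiableAt ℝ f x :=
  hf.differentiable (by simp) x

theorem contDiff_epd {f : E → ℝ} (hf : ContDiff ℝ (⊤ : ℕ∞) f) (i : Fin n) :
    ContDiff ℝ (⊤ : ℕ∞) (epd i f) := by
  have h1 : ContDiff ℝ (⊤ : ℕ∞) (fderiv ℝ f) := hf.fderiv_right (by simp)
  exact h1.clm_apply contDiff_const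

theorem contDiff_elap {f : E → ℝ} (hf : ContDiff ℝ (⊤ : ℕ∞) f) : ContDiff ℝ (⊤ : ℕ∞) (elap f) :=
  ContDiff.sum fun i _ => contDiff_epd (contDiff_epd hf i) i

theorem epd_comm (f : E → ℝ) (hf : ContDiff ℝ (⊤ : ℕ∞) f) (i j : Fin n) (x : E) :
    epd i (epd j f) x = epd j (epd i f) x := by
  have hdiff : Differentiable ℝ f := hf.differentiable (by simp)
  have hder : ∀ y, HasFDerivAt f (fderiv ℝ f y) y := fun y => (hdiff y).hasFDerivAt
  have h1 : ContDiff ℝ (⊤ : ℕ∞) (fderiv ℝ f) := hf.fderiv_right (by simp)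
  have h2 : HasFDerivAt (fderiv ℝ f) (fderiv ℝ (fderiv ℝ f) x) x :=
    (h1.differentiable (by simp) x).hasFDerivAt
  have sym := second_derivative_symmetric hder h2
  have key : ∀ v a, fderiv ℝ (fun y => fderiv ℝ f y v) x a
      = fderiv ℝ (fderiv ℝ f) x a v := by
    intro v a
    have := ((ContinuousLinearMap.apply ℝ ℝ v).hasFDerivAt.comp x h2).fderiv
    rw [show (fun y => fderiv ℝ f y v) = (ContinuousLinearMap.apply ℝ ℝ v) ∘ (fderiv ℝ f)
      from rfl, this]
    rfl
  show fderiv ℝ (fun y => fderiv ℝ f y (EuclideanSpace.single j 1)) x (EuclideanSpace.single i 1)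
      = fderiv ℝ (fun y => fderiv ℝ f y (EuclideanSpace.single i 1)) x (EuclideanSpace.single j 1)
  rw [key, key]
  exact sym _ _

theorem epd_mul {f g : E → ℝ} {x : E} (hf : DifferentiableAt ℝ f x)
    (hg : DifferentiableAt ℝ g x) (i : Fin n) :
    epd i (fun y => f y * g y) x = epd i f x * g x + f x * epd i g x := by
  simp only [epd, fderiv_fun_mul hf hg]
  simp [mul_comm]
  ring

theorem epd_add {f g : E → ℝ} {x : E} (hf : DifferentiableAt ℝ f x)
    (hg : DifferentiableAt ℝ g x) (i : Fin n) :
    epd i (fun y => f y + g y) x = epd i f x + epd i g x := by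
  simp only [epd, fderiv_fun_add hf hg]; rfl

theorem epd_sum {ι : Type*} [Fintype ι] {f : ι → E → ℝ} {x : E}
    (hf : ∀ j, DifferentiableAt ℝ (f j) x) (i : Fin n) :
    epd i (fun y => ∑ j, f j y) x = ∑ j, epd i (f j) x := by
  simp only [epd]
  rw [fderiv_fun_sum (fun j _ => hf j)]
  simp

theorem epd_inv {f : E → ℝ} {x : E} (hf : DifferentiableAt ℝ f x)
    (hx : f x ≠ 0) (i : Fin n) :
    epd i (fun y => (f y)⁻¹) x = -(epd i f x) / f x ^ 2 := by
  have hg : DifferentiableAt ℝ (fun t : ℝ => t⁻¹) (f x) := differentiableAt_inv hx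
  have hc := fderiv_comp (𝕜 := ℝ) x hg hf
  simp only [epd]
  rw [show (fun y => (f y)⁻¹) = (fun t : ℝ => t⁻¹) ∘ f from rfl, hc, fderiv_inv]
  simp [div_eq_iff, pow_two, hx]
  ring

theorem epd_log {f : E → ℝ} {x : E} (hf : DifferentiableAt ℝ f x)
    (hx : f x ≠ 0) (i : Fin n) :
    epd i (fun y => Real.log (f y)) x = epd i f x / f x := by
  have := (hf.hasFDerivAt.log hx).fderiv
  simp only [epd, this]
  simp only [ContinuousLinearMap.coe_smul', Pi.smul_apply, smul_eq_mul]
  field_simp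

theorem epd_sq {f : E → ℝ} {x : E} (hf : DifferentiableAt ℝ f x) (i : Fin n) :
    epd i (fun y => f y ^ 2) x = 2 * f x * epd i f x := by
  have h : (fun y => f y ^ 2) = fun y => f y * f y := by funext y; ring
  rw [h, epd_mul hf hf]; ring

theorem epd_neg {f : E → ℝ} {x : E} (i : Fin n) :
    epd i (fun y => -(f y)) x = -(epd i f x) := by
  simp only [epd, fderiv_fun_neg]; rfl

theorem epd_const_mul {f : E → ℝ} {x : E} (hf : DifferentiableAt ℝ f x) (c : ℝ) (i : Fin n) :
    epd i (fun y => c * f y) x = c * epd i f x := by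
  simp only [epd, fderiv_const_mul hf c]; rfl

theorem egrad_apply {f : E → ℝ} {x : E} (i : Fin n) :
    egrad f x i = epd i f x := by
  have : inner ℝ (egrad f x) (EuclideanSpace.single i (1:ℝ)) = epd i f x := by
    simp only [egrad, gradient, epd]
    rw [InnerProductSpace.toDual_symm_apply]
  rw [← this]
  simp [EuclideanSpace.inner_single_right]

theorem norm_egrad_sq {f : E → ℝ} {x : E} :
    ‖egrad f x‖ ^ 2 = ∑ i, (epd i f x) ^ 2 := by
  rw [EuclideanSpace.norm_eq, Real.sq_sqrt (by positivity)]
  exact Finset.sum_congr rfl fun i _ => by rw [egrad_apply]; simp [sq_abs]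

theorem elap_mul {f g : E → ℝ} (hf : ContDiff ℝ (⊤ : ℕ∞) f) (hg : ContDiff ℝ (⊤ : ℕ∞) g) (x : E) :
    elap (fun y => f y * g y) x
      = elap f x * g x + 2 * ∑ j, epd j f x * epd j g x + f x * elap g x := by
  have h1 : ∀ i : Fin n, epd i (fun y => f y * g y)
      = fun y => epd i f y * g y + f y * epd i g y := by
    intro i; funext y; exact epd_mul (diffAt hf y) (diffAt hg y) i
  have h2 : ∀ i : Fin n, epd i (epd i (fun y => f y * g y)) x
      = epd i (epd i f) x * g x + 2 * (epd i f x * epd i g x) + f x * epd i (epd i g) x := by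
    intro i
    rw [h1 i, epd_add (((contDiff_epd hf i).mul hg).differentiable (by simp) x)
        ((hf.mul (contDiff_epd hg i)).differentiable (by simp) x),
      epd_mul (diffAt (contDiff_epd hf i) x) (diffAt hg x),
      epd_mul (diffAt hf x) (diffAt (contDiff_epd hg i) x)]
    ring
  simp only [elap, h2]
  rw [Finset.sum_add_distrib, Finset.sum_add_distrib, ← Finset.sum_mul, ← Finset.mul_sum,
    ← Finset.mul_sum]

theorem elap_inv {f : E → ℝ} (hf : ContDiff ℝ (⊤ : ℕ∞) f) (hz : ∀ y, f y ≠ 0) (x : E) :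
    elap (fun y => (f y)⁻¹) x
      = -(elap f x) / f x ^ 2 + 2 * (∑ j, (epd j f x) ^ 2) / f x ^ 3 := by
  have h1 : ∀ i : Fin n, epd i (fun y => (f y)⁻¹)
      = fun y => -(epd i f y) * ((f y) ^ 2)⁻¹ := by
    intro i; funext y
    rw [epd_inv (diffAt hf y) (hz y) i]; ring
  have hsq : ContDiff ℝ (⊤ : ℕ∞) (fun y => f y ^ 2) := hf.pow 2
  have h2 : ∀ i : Fin n, epd i (epd i (fun y => (f y)⁻¹)) x
      = -(epd i (epd i f) x) * ((f x) ^ 2)⁻¹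
        + -(epd i f x) * (-(2 * f x * epd i f x) / (f x ^ 2) ^ 2) := by
    intro i
    rw [h1 i]
    have hneg : ContDiff ℝ (⊤ : ℕ∞) (fun y => -(epd i f y)) := (contDiff_epd hf i).neg
    have hinvsq : DifferentiableAt ℝ (fun y => ((f y) ^ 2)⁻¹) x :=
      (hsq.inv (fun y => pow_ne_zero 2 (hz y))).differentiable (by simp) x
    rw [epd_mul (hneg.differentiable (by simp) x) hinvsq]
    congr 1
    · congr 1
      have : epd i (fun y => -(epd i f y)) x = -(epd i (epd i f) x) := by
        simp only [epd, fderiv_fun_neg]; rfl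
      rw [this]
    · congr 1
      rw [epd_inv (diffAt hsq x) (pow_ne_zero 2 (hz x)) i, epd_sq (diffAt hf x) i]
  simp only [elap, h2]
  rw [Finset.sum_add_distrib]
  have hfx := hz x
  have e1 : ∑ i, -(epd i (epd i f) x) * ((f x) ^ 2)⁻¹ = -(elap f x) / f x ^ 2 := by
    have : ∀ i : Fin n, -(epd i (epd i f) x) * ((f x) ^ 2)⁻¹
        = epd i (epd i f) x * (-((f x ^ 2)⁻¹)) := fun i => by ring
    simp_rw [this]
    rw [← Finset.sum_mul, elap]
    field_simp
  have e2 : ∑ i, -(epd i f x) * (-(2 * f x * epd i f x) / (f x ^ 2) ^ 2)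
      = 2 * (∑ j, (epd j f x) ^ 2) / f x ^ 3 := by
    have : ∀ i : Fin n, -(epd i f x) * (-(2 * f x * epd i f x) / (f x ^ 2) ^ 2)
        = (epd i f x) ^ 2 * (2 * f x / (f x ^ 2) ^ 2) := fun i => by ring
    simp_rw [this]
    rw [← Finset.sum_mul]
    field_simp
  rw [e1, e2, elap]

theorem bochner {g : E → ℝ} (hg : ContDiff ℝ (⊤ : ℕ∞) g) (x : E) :
    elap (fun y => ∑ j, (epd j g y) ^ 2) x
      = 2 * (∑ i, ∑ j, (epd i (epd j g) x) ^ 2)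
        + 2 * ∑ j, epd j g x * epd j (elap g) x := by
  have hdg : ∀ j : Fin n, ContDiff ℝ (⊤ : ℕ∞) (epd j g) := fun j => contDiff_epd hg j
  have hddg : ∀ i j : Fin n, ContDiff ℝ (⊤ : ℕ∞) (epd i (epd j g)) := fun i j =>
    contDiff_epd (hdg j) i
  have h1 : ∀ i : Fin n, epd i (fun y => ∑ j, (epd j g y) ^ 2)
      = fun y => ∑ j, 2 * (epd j g y * epd i (epd j g) y) := by
    intro i; funext y
    rw [epd_sum (fun j => diffAt ((hdg j).pow 2) y) i]
    refine Finset.sum_congr rfl fun j _ => ?_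
    rw [epd_sq (diffAt (hdg j) y) i]; ring
  have h2 : ∀ i : Fin n, epd i (epd i (fun y => ∑ j, (epd j g y) ^ 2)) x
      = ∑ j, 2 * ((epd i (epd j g) x) ^ 2 + epd j g x * epd i (epd i (epd j g)) x) := by
    intro i
    rw [h1 i]
    have hprod : ∀ j : Fin n, ContDiff ℝ (⊤ : ℕ∞) (fun y => epd j g y * epd i (epd j g) y) :=
      fun j => (hdg j).mul (hddg i j)
    rw [epd_sum (fun j => diffAt (contDiff_const.mul (hprod j)) x) i]
    refine Finset.sum_congr rfl fun j _ => ?_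
    rw [epd_const_mul (diffAt (hprod j) x) 2 i,
      epd_mul (diffAt (hdg j) x) (diffAt (hddg i j) x)]
    ring
  have h3 : ∀ i j : Fin n, epd i (epd i (epd j g)) x = epd j (epd i (epd i g)) x := by
    intro i j
    have e1 : epd i (epd j g) = epd j (epd i g) := funext fun y => epd_comm g hg i j y
    rw [e1, epd_comm (epd i g) (contDiff_epd hg i) i j x]
  have h4 : ∀ j : Fin n, ∑ i, epd i (epd i (epd j g)) x = epd j (elap g) x := by
    intro j
    have : epd j (elap g) x = epd j (fun y => ∑ i, epd i (epd i g) y) x := rfl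
    rw [this, epd_sum (fun i => diffAt (contDiff_epd (contDiff_epd hg i) i) x) j]
    exact Finset.sum_congr rfl fun i _ => h3 i j
  simp only [elap, h2]
  rw [Finset.sum_comm]
  have h5 : ∀ j : Fin n, ∑ i, 2 * ((epd i (epd j g) x) ^ 2 + epd j g x * epd i (epd i (epd j g)) x)
      = 2 * (∑ i, (epd i (epd j g) x) ^ 2) + 2 * (epd j g x * epd j (elap g) x) := by
    intro j
    rw [show ∀ s : ℝ, 2 * (epd j g x * s) = 2 * epd j g x * s from fun s => by ring, ← h4 j]
    rw [Finset.mul_sum, Finset.mul_sum, ← Finset.sum_add_distrib]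
    exact Finset.sum_congr rfl fun i _ => by ring
  simp only [h5]
  rw [Finset.sum_add_distrib, ← Finset.mul_sum, ← Finset.mul_sum]
  congr 1
  rw [Finset.sum_comm]

theorem fderiv_translate (f : E → ℝ) (hf : Differentiable ℝ f) (c x : E) :
    fderiv ℝ (fun y => f (y + c)) x = fderiv ℝ f (x + c) := by
  have h1 : HasFDerivAt (fun y : E => y + c) (ContinuousLinearMap.id ℝ E) x :=
    (hasFDerivAt_id x).add_const c
  have h2 := ((hf (x + c)).hasFDerivAt.comp x h1).fderiv
  rw [show ((fun y => f (y + c)) : E → ℝ) = f ∘ (fun y => y + c) from rfl, h2]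
  ext v; rfl

theorem fderiv_periodic (f : E → ℝ) (hf : Differentiable ℝ f) (c : E)
    (hp : ∀ x, f (x + c) = f x) (x : E) : fderiv ℝ f (x + c) = fderiv ℝ f x := by
  rw [← fderiv_translate f hf c x]
  congr 1
  funext y; exact hp y

theorem epd_periodic (f : E → ℝ) (hf : Differentiable ℝ f) (c : E)
    (hp : ∀ x, f (x + c) = f x) (i : Fin n) (x : E) : epd i f (x + c) = epd i f x := by
  simp [epd, fderiv_periodic f hf c hp x]

noncomputable def lat {n : ℕ} (m : Fin n → ℤ) : EuclideanSpace ℝ (Fin n) :=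
  (WithLp.equiv 2 (Fin n → ℝ)).symm (fun i => (m i : ℝ))

theorem exists_global_max (f : E → ℝ) (hf : Continuous f)
    (hp : ∀ (x : E) (m : Fin n → ℤ), f (x + lat m) = f x) :
    ∃ x₀, ∀ x, f x ≤ f x₀ := by
  obtain ⟨x₀, -, hx₀⟩ := (isCompact_closedBall (0 : E) (n + 1)).exists_isMaxOn
    ⟨0, Metric.mem_closedBall_self (by positivity)⟩ hf.continuousOn
  refine ⟨x₀, fun x => ?_⟩
  set m : Fin n → ℤ := fun i => -⌊x i⌋ with hm
  have hz : x + lat m ∈ Metric.closedBall (0 : E) (n + 1) := by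
    rw [Metric.mem_closedBall, dist_zero_right, EuclideanSpace.norm_eq]
    have hcoord : ∀ i, |(x + lat m) i| ≤ 1 := by
      intro i
      have : (x + lat m) i = x i - ⌊x i⌋ := by
        simp [lat, hm, sub_eq_add_neg]
      have h1 := Int.fract_nonneg (x i)
      have h2 := Int.fract_lt_one (x i)
      rw [Int.self_sub_floor] at this
      rw [this, abs_le]
      constructor <;> linarith
    calc Real.sqrt (∑ i, ‖(x + lat m) i‖ ^ 2) ≤ Real.sqrt (∑ _i : Fin n, 1) := by
          apply Real.sqrt_le_sqrt
          apply Finset.sum_le_sum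
          intro i _
          have := hcoord i
          rw [Real.norm_eq_abs]
          nlinarith [abs_nonneg ((x + lat m) i)]
      _ ≤ n + 1 := by
          simp only [Finset.sum_const, Finset.card_univ, Fintype.card_fin, nsmul_eq_mul, mul_one]
          rw [show ((n : ℝ) + 1) = Real.sqrt ((n+1)^2) from (Real.sqrt_sq (by positivity)).symm]
          apply Real.sqrt_le_sqrt; nlinarith [Nat.cast_nonneg (α := ℝ) n]
  calc f x = f (x + lat m) := (hp x m).symm
    _ ≤ f x₀ := hx₀ hz

theorem deriv2_nonpos {G h : ℝ → ℝ} {c : ℝ} (hG : ∀ t, HasDerivAt G (h t) t)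
    (hmax : ∀ t, G t ≤ G 0) (hh : HasDerivAt h c 0) (h0 : h 0 = 0) : c ≤ 0 := by
  by_contra hc
  push_neg at hc
  have hslope : Filter.Tendsto (fun t => h t / t) (nhdsWithin 0 (Set.Ioi 0)) (nhds c) := by
    have := hh.hasDerivWithinAt (s := Set.Ioi 0)
    have := hasDerivWithinAt_iff_tendsto_slope.mp this
    have h2 := this.mono_left
      (nhdsWithin_mono _ (fun t (ht : t ∈ Set.Ioi (0:ℝ)) => ⟨ht, (ne_of_gt ht : t ≠ 0)⟩))
    exact h2.congr (fun t => by simp [slope_def_field, h0])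
  have hev : ∀ᶠ t in nhdsWithin 0 (Set.Ioi 0), 0 < h t / t :=
    hslope.eventually (eventually_gt_nhds hc)
  obtain ⟨u, hu, hsub⟩ := mem_nhdsGT_iff_exists_Ioo_subset.mp hev
  set ε : ℝ := min (u/2) 1 with hε
  have hu0 : (0:ℝ) < u := hu
  have hε0 : 0 < ε := by positivity
  have hεu : ε < u := by
    have : u/2 < u := by linarith
    exact lt_of_le_of_lt (min_le_left _ _) this
  have hmono : StrictMonoOn G (Set.Icc 0 ε) := by
    apply strictMonoOn_of_deriv_pos (convex_Icc 0 ε)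
    · exact fun t _ => (hG t).continuousAt.continuousWithinAt
    · intro t ht
      rw [interior_Icc] at ht
      have htu : t ∈ Set.Ioo (0:ℝ) u := ⟨ht.1, lt_trans ht.2 hεu⟩
      have hpos : 0 < h t / t := hsub htu
      rw [(hG t).deriv]
      have ht0 : 0 < t := ht.1
      by_contra hle
      push_neg at hle
      have : h t / t ≤ 0 := div_nonpos_of_nonpos_of_nonneg hle (le_of_lt ht0)
      linarith
  have : G 0 < G ε := hmono (Set.left_mem_Icc.mpr (le_of_lt hε0))
    (Set.right_mem_Icc.mpr (le_of_lt hε0)) hε0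
  exact absurd (hmax ε) (not_le.mpr this)

theorem epd_eq_zero_at_max {g : E → ℝ} (x₀ : E)
    (hmax : ∀ x, g x ≤ g x₀) (i : Fin n) : epd i g x₀ = 0 := by
  have hloc : IsLocalMax g x₀ := Filter.Eventually.of_forall hmax
  simp [epd, hloc.fderiv_eq_zero]

theorem epd2_nonpos_at_max {g : E → ℝ} (hg : ContDiff ℝ (⊤ : ℕ∞) g) (x₀ : E)
    (hmax : ∀ x, g x ≤ g x₀) (i : Fin n) : epd i (epd i g) x₀ ≤ 0 := by
  set v : E := EuclideanSpace.single i 1 with hv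
  have hφ : ∀ t : ℝ, HasDerivAt (fun t : ℝ => x₀ + t • v) v t := by
    intro t
    have h1 : HasDerivAt (fun t : ℝ => t • v) ((1:ℝ) • v) t :=
      (hasDerivAt_id t).smul_const v
    simpa using h1.const_add x₀
  have hG : ∀ t : ℝ, HasDerivAt (fun t : ℝ => g (x₀ + t • v)) (epd i g (x₀ + t • v)) t := by
    intro t
    exact (diffAt hg _).hasFDerivAt.comp_hasDerivAt t (hφ t)
  have hh : HasDerivAt (fun t : ℝ => epd i g (x₀ + t • v)) (epd i (epd i g) x₀) 0 := by
    have := (diffAt (contDiff_epd hg i) (x₀ + (0:ℝ) • v)).hasFDerivAt.comp_hasDerivAt 0 (hφ 0)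
    simp only [zero_smul, add_zero] at this
    exact this
  refine deriv2_nonpos hG (fun t => by simpa using hmax _) hh ?_
  simpa using epd_eq_zero_at_max x₀ hmax i


theorem elap_add {f g : E → ℝ} (hf : ContDiff ℝ (⊤ : ℕ∞) f) (hg : ContDiff ℝ (⊤ : ℕ∞) g) (x : E) :
    elap (fun y => f y + g y) x = elap f x + elap g x := by
  have h1 : ∀ i : Fin n, epd i (fun y => f y + g y) = fun y => epd i f y + epd i g y :=
    fun i => funext fun y => epd_add (diffAt hf y) (diffAt hg y) i
  have h2 : ∀ i : Fin n, epd i (epd i (fun y => f y + g y)) x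
      = epd i (epd i f) x + epd i (epd i g) x := by
    intro i
    rw [h1 i, epd_add (diffAt (contDiff_epd hf i) x) (diffAt (contDiff_epd hg i) x)]
  simp only [elap, h2]
  rw [Finset.sum_add_distrib]

theorem amgm {b : ℝ} (hb : 0 < b) (X C : ℝ) : 2 * X * C ≤ X ^ 2 / (2 * b) + 2 * b * C ^ 2 := by
  have h2b : (0:ℝ) < 2 * b := by linarith
  have h1 : (2 * X * C - 2 * b * C ^ 2) * (2 * b) ≤ X ^ 2 := by nlinarith [sq_nonneg (X - 2*b*C)]
  have h2 : 2 * X * C - 2 * b * C ^ 2 ≤ X ^ 2 / (2 * b) := (le_div_iff₀ h2b).mpr h1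
  linarith

end PoissonAux


set_option maxHeartbeats 1000000 in
open PoissonAux in
/-- Gradient estimate for positive periodic solutions of the
Poisson equation `-Δu = A` on `ℝⁿ` (i.e. on the flat torus `ℝⁿ/ℤⁿ`): with
`w = log u` and `Q = ‖∇w‖² + A/u`, for every `b > 0` and every `x`,
`Q(x) ≤ max { 2n·sup(b − A/u), √(n·sup max(0, A²/u² + ‖∇A‖²/(2bu²) − 2bA/u − ΔA/u)) }`. -/
theorem poisson_gradient_estimate_periodic (n : ℕ) (hn : 1 ≤ n)
    (u : EuclideanSpace ℝ (Fin n) → ℝ) (hu : ContDiff ℝ (⊤ : ℕ∞) u)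
    (hpos : ∀ x, 0 < u x)
    (hper : ∀ (x : EuclideanSpace ℝ (Fin n)) (m : Fin n → ℤ),
      u (x + (WithLp.equiv 2 (Fin n → ℝ)).symm (fun i => (m i : ℝ))) = u x)
    (A : EuclideanSpace ℝ (Fin n) → ℝ) (hA : A = fun x => -(elap u x))
    (w : EuclideanSpace ℝ (Fin n) → ℝ) (hw : w = Real.log ∘ u)
    (Q : EuclideanSpace ℝ (Fin n) → ℝ)
    (hQ : Q = fun x => ‖egrad w x‖ ^ 2 + A x * (u x)⁻¹) :
    ∀ b : ℝ, 0 < b → ∀ x,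
      Q x ≤ max (2 * n * ⨆ y, (b - A y / u y))
        (Real.sqrt (n * ⨆ y, max 0 ((A y) ^ 2 / (u y) ^ 2
          + ‖egrad A y‖ ^ 2 / (2 * b * (u y) ^ 2)
          - 2 * b * A y / u y - elap A y / u y))) := by
  intro b hb x
  classical
  have hn0 : (0:ℝ) < n := by exact_mod_cast Nat.lt_of_lt_of_le Nat.zero_lt_one hn
  have hune : ∀ y, u y ≠ 0 := fun y => ne_of_gt (hpos y)
  have hAc : ContDiff ℝ (⊤ : ℕ∞) A := by rw [hA]; exact (contDiff_elap hu).neg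
  have hwc : ContDiff ℝ (⊤ : ℕ∞) w := by rw [hw]; exact hu.log hune
  -- the auxiliary functions
  set H : EuclideanSpace ℝ (Fin n) → ℝ := fun y => ∑ j, (epd j w y) ^ 2 with hHdef
  set Q' : EuclideanSpace ℝ (Fin n) → ℝ := fun y => H y + A y * (u y)⁻¹ with hQ'def
  have hHc : ContDiff ℝ (⊤ : ℕ∞) H := ContDiff.sum fun j _ => (contDiff_epd hwc j).pow 2
  have hAuc : ContDiff ℝ (⊤ : ℕ∞) (fun y => A y * (u y)⁻¹) := hAc.mul (hu.inv hune)
  have hQ'c : ContDiff ℝ (⊤ : ℕ∞) Q' := hHc.add hAuc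
  have hQQ' : Q = Q' := by
    rw [hQ, hQ'def]; funext y; rw [norm_egrad_sq]
  -- periodicity
  have hperu : ∀ (z : EuclideanSpace ℝ (Fin n)) (m : Fin n → ℤ), u (z + lat m) = u z :=
    fun z m => hper z m
  have hPepd : ∀ (f : EuclideanSpace ℝ (Fin n) → ℝ), ContDiff ℝ (⊤ : ℕ∞) f →
      (∀ z m, f (z + lat m) = f z) →
      ∀ i, (∀ (z : EuclideanSpace ℝ (Fin n)) (m : Fin n → ℤ),
        epd i f (z + lat m) = epd i f z) :=
    fun f hf hp i z m =>
      epd_periodic f (hf.differentiable (by simp)) (lat m) (fun y => hp y m) i z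
  have hperA : ∀ z m, A (z + lat m) = A z := by
    intro z m
    rw [hA]
    simp only [elap, neg_inj]
    exact Finset.sum_congr rfl fun i _ =>
      hPepd (epd i u) (contDiff_epd hu i) (hPepd u hu hperu i) i z m
  have hperw : ∀ z m, w (z + lat m) = w z := by
    intro z m; rw [hw]; simp [Function.comp, hperu z m]
  have hperH : ∀ z m, H z = H (z + lat m) := by
    intro z m
    simp only [hHdef]
    exact (Finset.sum_congr rfl fun j _ => by
      rw [hPepd w hwc hperw j z m]).symm
  have hperQ' : ∀ z m, Q' (z + lat m) = Q' z := by
    intro z m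
    simp only [hQ'def]
    rw [← hperH z m, hperA z m, hperu z m]
  -- the maximum point
  obtain ⟨x₀, hmax⟩ := exists_global_max Q' hQ'c.continuous hperQ'
  have hcrit : ∀ i, epd i Q' x₀ = 0 := fun i => epd_eq_zero_at_max x₀ hmax i
  have hlap : elap Q' x₀ ≤ 0 := by
    rw [elap]
    exact Finset.sum_nonpos fun i _ => epd2_nonpos_at_max hQ'c x₀ hmax i
  -- pointwise identities
  have hepdw : ∀ (i : Fin n) y, epd i w y = epd i u y * (u y)⁻¹ := by
    intro i y
    have hw2 : w = fun z => Real.log (u z) := hw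
    rw [hw2, epd_log (diffAt hu y) (hune y) i, div_eq_mul_inv]
  have hwfun : ∀ i : Fin n, epd i w = fun y => epd i u y * (u y)⁻¹ :=
    fun i => funext fun y => hepdw i y
  have helapu : ∀ y, elap u y = -A y := by intro y; rw [hA]; simp
  have helapw : ∀ y, elap w y = -(Q' y) := by
    intro y
    have hterm : ∀ i : Fin n, epd i (epd i w) y
        = epd i (epd i u) y * (u y)⁻¹ - (epd i w y) ^ 2 := by
      intro i
      rw [hwfun i, epd_mul (g := fun y => (u y)⁻¹) (diffAt (contDiff_epd hu i) y) ((hu.inv hune).differentiable (by simp) y),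
        epd_inv (diffAt hu y) (hune y) i]
      beta_reduce
      have := hune y
      field_simp
      ring
    simp only [elap, hterm]
    rw [Finset.sum_sub_distrib, ← Finset.sum_mul]
    have : (∑ i, epd i (epd i u) y) = elap u y := rfl
    rw [this, helapu y, hQ'def]
    simp only [hHdef]
    ring
  have helapwfun : elap w = fun y => -(Q' y) := funext helapw
  -- Bochner at the maximum point
  have hbochner : elap H x₀ = 2 * (∑ i, ∑ j, (epd i (epd j w) x₀) ^ 2) := by
    have h1 := bochner hwc x₀
    have h2 : ∀ j : Fin n, epd j (elap w) x₀ = 0 := by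
      intro j
      rw [helapwfun]
      have : epd j (fun y => -(Q' y)) x₀ = -(epd j Q' x₀) := epd_neg j
      rw [this, hcrit j, neg_zero]
    have h3 : (∑ j, epd j w x₀ * epd j (elap w) x₀) = 0 := by
      rw [Finset.sum_eq_zero]
      intro j _
      rw [h2 j, mul_zero]
    rw [hHdef]
    rw [h1, h3, mul_zero, add_zero]
  -- Laplacian of A/u at the maximum point
  have hAu : elap (fun y => A y * (u y)⁻¹) x₀
      = elap A x₀ * (u x₀)⁻¹ + 2 * ∑ j, epd j A x₀ * (-(epd j u x₀) / u x₀ ^ 2)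
        + A x₀ * (-(elap u x₀) / u x₀ ^ 2 + 2 * (∑ j, (epd j u x₀) ^ 2) / u x₀ ^ 3) := by
    rw [elap_mul (g := fun y => (u y)⁻¹) hAc (hu.inv hune) x₀, elap_inv hu hune x₀]
    have e : (∑ j, epd j A x₀ * epd j (fun y => (u y)⁻¹) x₀)
        = ∑ j, epd j A x₀ * (-(epd j u x₀) / u x₀ ^ 2) :=
      Finset.sum_congr rfl fun j _ => by rw [epd_inv (diffAt hu x₀) (hune x₀) j]
    rw [e]
  -- split of the Laplacian of Q'
  have hsplit : elap Q' x₀ = elap H x₀ + elap (fun y => A y * (u y)⁻¹) x₀ := by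
    rw [hQ'def]
    exact elap_add hHc hAuc x₀
  -- conversion of sums
  have hHx : H x₀ = ∑ j, (epd j w x₀) ^ 2 := rfl
  have hwj : ∀ j : Fin n, epd j u x₀ = epd j w x₀ * u x₀ := by
    intro j
    rw [hepdw j x₀, mul_assoc, inv_mul_cancel₀ (hune x₀), mul_one]
  have hSu : (∑ j, (epd j u x₀) ^ 2) = H x₀ * u x₀ ^ 2 := by
    rw [hHx, Finset.sum_mul]
    exact Finset.sum_congr rfl fun j _ => by rw [hwj j]; ring
  have hPsum : (∑ j, epd j A x₀ * (-(epd j u x₀) / u x₀ ^ 2))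
      = -((∑ j, epd j A x₀ * epd j w x₀) * (u x₀)⁻¹) := by
    have e : ∀ j : Fin n, epd j A x₀ * (-(epd j u x₀) / u x₀ ^ 2)
        = (epd j A x₀ * epd j w x₀) * (-((u x₀)⁻¹)) := by
      intro j
      rw [hwj j]
      have := hune x₀
      field_simp
    simp_rw [e]
    rw [← Finset.sum_mul]
    ring
  -- the central inequality at the maximum point
  have key0 : 2 * (∑ i, ∑ j, (epd i (epd j w) x₀) ^ 2)
      + (elap A x₀ * (u x₀)⁻¹ - 2 * ((∑ j, epd j A x₀ * epd j w x₀) * (u x₀)⁻¹)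
        + (A x₀ * (u x₀)⁻¹) ^ 2 + 2 * (A x₀ * (u x₀)⁻¹) * H x₀) ≤ 0 := by
    have e2 : elap (fun y => A y * (u y)⁻¹) x₀
        = elap A x₀ * (u x₀)⁻¹ - 2 * ((∑ j, epd j A x₀ * epd j w x₀) * (u x₀)⁻¹)
          + (A x₀ * (u x₀)⁻¹) ^ 2 + 2 * (A x₀ * (u x₀)⁻¹) * H x₀ := by
      rw [hAu, hPsum, hSu, helapu x₀]
      have := hune x₀
      field_simp
      ring
    have e3 : elap Q' x₀ = 2 * (∑ i, ∑ j, (epd i (epd j w) x₀) ^ 2)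
        + (elap A x₀ * (u x₀)⁻¹ - 2 * ((∑ j, epd j A x₀ * epd j w x₀) * (u x₀)⁻¹)
          + (A x₀ * (u x₀)⁻¹) ^ 2 + 2 * (A x₀ * (u x₀)⁻¹) * H x₀) := by
      rw [hsplit, hbochner, e2]
    linarith [hlap, e3.ge, e3.le]
  -- Cauchy–Schwarz for the Hessian term
  have hCS : (Q' x₀) ^ 2 ≤ n * (∑ i, ∑ j, (epd i (epd j w) x₀) ^ 2) := by
    have h0 : (Q' x₀) ^ 2 = (elap w x₀) ^ 2 := by rw [helapw x₀]; ring
    have h1 : (elap w x₀) ^ 2 ≤ n * ∑ i, (epd i (epd i w) x₀) ^ 2 := by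
      have := sq_sum_le_card_mul_sum_sq (s := Finset.univ)
        (f := fun i : Fin n => epd i (epd i w) x₀)
      simpa [elap, Finset.card_univ] using this
    have h2 : (∑ i, (epd i (epd i w) x₀) ^ 2) ≤ ∑ i, ∑ j, (epd i (epd j w) x₀) ^ 2 :=
      Finset.sum_le_sum fun i _ =>
        Finset.single_le_sum (f := fun j => (epd i (epd j w) x₀) ^ 2)
          (fun j _ => sq_nonneg _) (Finset.mem_univ i)
    calc (Q' x₀) ^ 2 = (elap w x₀) ^ 2 := h0
      _ ≤ n * ∑ i, (epd i (epd i w) x₀) ^ 2 := h1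
      _ ≤ n * ∑ i, ∑ j, (epd i (epd j w) x₀) ^ 2 :=
          mul_le_mul_of_nonneg_left h2 (le_of_lt hn0)
  -- weighted AM–GM for the cross term
  have hAM : 2 * ((∑ j, epd j A x₀ * epd j w x₀) * (u x₀)⁻¹)
      ≤ (∑ j, (epd j A x₀) ^ 2) * (2 * b * u x₀ ^ 2)⁻¹ + 2 * b * H x₀ := by
    have per : ∀ j : Fin n, (epd j A x₀ * epd j w x₀) * (2 * (u x₀)⁻¹)
        ≤ (epd j A x₀) ^ 2 * (2 * b * u x₀ ^ 2)⁻¹ + 2 * b * (epd j w x₀) ^ 2 := by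
      intro j
      have h := amgm hb (epd j A x₀ * (u x₀)⁻¹) (epd j w x₀)
      have e1 : (epd j A x₀ * (u x₀)⁻¹) ^ 2 / (2 * b)
          = (epd j A x₀) ^ 2 * (2 * b * u x₀ ^ 2)⁻¹ := by
        have := hune x₀
        have hb' := ne_of_gt hb
        field_simp
        try ring
        try tauto
      calc (epd j A x₀ * epd j w x₀) * (2 * (u x₀)⁻¹)
          = 2 * (epd j A x₀ * (u x₀)⁻¹) * epd j w x₀ := by ring
        _ ≤ (epd j A x₀ * (u x₀)⁻¹) ^ 2 / (2 * b) + 2 * b * (epd j w x₀) ^ 2 := h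
        _ = (epd j A x₀) ^ 2 * (2 * b * u x₀ ^ 2)⁻¹ + 2 * b * (epd j w x₀) ^ 2 := by rw [e1]
    have hsum := Finset.sum_le_sum fun j (_ : j ∈ Finset.univ) => per j
    rw [← Finset.sum_mul, Finset.sum_add_distrib, ← Finset.sum_mul, ← Finset.mul_sum] at hsum
    calc 2 * ((∑ j, epd j A x₀ * epd j w x₀) * (u x₀)⁻¹)
        = (∑ j, epd j A x₀ * epd j w x₀) * (2 * (u x₀)⁻¹) := by ring
      _ ≤ (∑ j, (epd j A x₀) ^ 2) * (2 * b * u x₀ ^ 2)⁻¹ + 2 * b * ∑ j, (epd j w x₀) ^ 2 := hsum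
      _ = (∑ j, (epd j A x₀) ^ 2) * (2 * b * u x₀ ^ 2)⁻¹ + 2 * b * H x₀ := by rw [← hHx]
  -- the quadratic inequality at the maximum point
  have hq2T : 2 * (Q' x₀) ^ 2 / n ≤ 2 * (∑ i, ∑ j, (epd i (epd j w) x₀) ^ 2) := by
    rw [div_le_iff₀ hn0]
    nlinarith [hCS]
  have hQ'x : Q' x₀ = H x₀ + A x₀ * (u x₀)⁻¹ := rfl
  have hBH : (A x₀ * (u x₀)⁻¹) * H x₀
      = (A x₀ * (u x₀)⁻¹) * Q' x₀ - (A x₀ * (u x₀)⁻¹) ^ 2 := by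
    rw [hQ'x]; ring
  have hbH : b * H x₀ = b * Q' x₀ - b * (A x₀ * (u x₀)⁻¹) := by
    rw [hQ'x]; ring
  have hfinal : 2 * (Q' x₀) ^ 2 / n
      ≤ ((A x₀ * (u x₀)⁻¹) ^ 2 + (∑ j, (epd j A x₀) ^ 2) * (2 * b * u x₀ ^ 2)⁻¹
          - 2 * b * (A x₀ * (u x₀)⁻¹) - elap A x₀ * (u x₀)⁻¹)
        + 2 * (b - A x₀ * (u x₀)⁻¹) * Q' x₀ := by
    linarith [key0, hq2T, hAM, hBH, hbH]
  -- suprema are genuine upper bounds (by periodicity and continuity)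
  set M1 : ℝ := ⨆ y, (b - A y / u y) with hM1def
  set S : ℝ := ⨆ y, max 0 ((A y) ^ 2 / (u y) ^ 2
    + ‖egrad A y‖ ^ 2 / (2 * b * (u y) ^ 2)
    - 2 * b * A y / u y - elap A y / u y) with hSdef
  have hg1c : Continuous (fun y => b - A y / u y) :=
    continuous_const.sub (hAc.continuous.div hu.continuous hune)
  have hg1per : ∀ z m, (fun y => b - A y / u y) (z + lat m) = (fun y => b - A y / u y) z := by
    intro z m
    simp only
    rw [hperA z m, hperu z m]
  obtain ⟨x₁, hx₁⟩ := exists_global_max _ hg1c hg1per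
  have hbdd1 : BddAbove (Set.range (fun y => b - A y / u y)) := by
    refine ⟨b - A x₁ / u x₁, ?_⟩
    rintro _ ⟨y, rfl⟩
    exact hx₁ y
  have hM1 : b - A x₀ / u x₀ ≤ M1 := le_ciSup hbdd1 x₀
  -- the second supremum
  have hegradA : ∀ y : EuclideanSpace ℝ (Fin n), ‖egrad A y‖ ^ 2 = ∑ i, (epd i A y) ^ 2 :=
    fun y => norm_egrad_sq
  have helapAper : ∀ z m, elap A (z + lat m) = elap A z := by
    intro z m
    simp only [elap]
    exact Finset.sum_congr rfl fun i _ =>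
      hPepd (epd i A) (contDiff_epd hAc i) (hPepd A hAc hperA i) i z m
  have hegradAper : ∀ z m, ‖egrad A (z + lat m)‖ ^ 2 = ‖egrad A z‖ ^ 2 := by
    intro z m
    rw [hegradA, hegradA]
    exact Finset.sum_congr rfl fun i _ => by rw [hPepd A hAc hperA i z m]
  have hg2c : Continuous (fun y => max 0 ((A y) ^ 2 / (u y) ^ 2
      + ‖egrad A y‖ ^ 2 / (2 * b * (u y) ^ 2)
      - 2 * b * A y / u y - elap A y / u y)) := by
    have hrw : (fun y => max 0 ((A y) ^ 2 / (u y) ^ 2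
        + ‖egrad A y‖ ^ 2 / (2 * b * (u y) ^ 2)
        - 2 * b * A y / u y - elap A y / u y))
        = fun y => max 0 ((A y) ^ 2 / (u y) ^ 2
        + (∑ i, (epd i A y) ^ 2) / (2 * b * (u y) ^ 2)
        - 2 * b * A y / u y - elap A y / u y) := by
      funext y; rw [hegradA]
    rw [hrw]
    have c1 : Continuous fun y : EuclideanSpace ℝ (Fin n) => (A y) ^ 2 / (u y) ^ 2 :=
      (hAc.continuous.pow 2).div (hu.continuous.pow 2) (fun y => pow_ne_zero 2 (hune y))
    have c2 : Continuous fun y : EuclideanSpace ℝ (Fin n) =>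
        (∑ i, (epd i A y) ^ 2) / (2 * b * (u y) ^ 2) := by
      apply Continuous.div
      · exact continuous_finset_sum _ fun i _ => ((contDiff_epd hAc i).continuous.pow 2)
      · exact (continuous_const.mul (hu.continuous.pow 2))
      · intro y
        have := hune y
        positivity
    have c3 : Continuous fun y : EuclideanSpace ℝ (Fin n) => 2 * b * A y / u y :=
      (continuous_const.mul hAc.continuous).div hu.continuous hune
    have c4 : Continuous fun y : EuclideanSpace ℝ (Fin n) => elap A y / u y :=
      (contDiff_elap hAc).continuous.div hu.continuous hune
    exact continuous_const.max (((c1.add c2).sub c3).sub c4)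
  have hg2per : ∀ z m, (fun y => max 0 ((A y) ^ 2 / (u y) ^ 2
      + ‖egrad A y‖ ^ 2 / (2 * b * (u y) ^ 2)
      - 2 * b * A y / u y - elap A y / u y)) (z + lat m)
      = (fun y => max 0 ((A y) ^ 2 / (u y) ^ 2
      + ‖egrad A y‖ ^ 2 / (2 * b * (u y) ^ 2)
      - 2 * b * A y / u y - elap A y / u y)) z := by
    intro z m
    simp only
    rw [hperA z m, hperu z m, helapAper z m, hegradAper z m]
  obtain ⟨x₂, hx₂⟩ := exists_global_max _ hg2c hg2per
  have hbdd2 : BddAbove (Set.range (fun y => max 0 ((A y) ^ 2 / (u y) ^ 2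
      + ‖egrad A y‖ ^ 2 / (2 * b * (u y) ^ 2)
      - 2 * b * A y / u y - elap A y / u y))) := by
    refine ⟨max 0 ((A x₂) ^ 2 / (u x₂) ^ 2 + ‖egrad A x₂‖ ^ 2 / (2 * b * (u x₂) ^ 2)
      - 2 * b * A x₂ / u x₂ - elap A x₂ / u x₂), ?_⟩
    rintro _ ⟨y, rfl⟩
    exact hx₂ y
  have hS_br : (A x₀) ^ 2 / (u x₀) ^ 2 + ‖egrad A x₀‖ ^ 2 / (2 * b * (u x₀) ^ 2)
      - 2 * b * A x₀ / u x₀ - elap A x₀ / u x₀ ≤ S :=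
    le_trans (le_max_right 0 _) (le_ciSup hbdd2 x₀)
  have hS0 : (0:ℝ) ≤ S := le_trans (le_max_left 0 _) (le_ciSup hbdd2 x)
  -- convert the bracket to inverse form
  have hconv : (A x₀) ^ 2 / (u x₀) ^ 2 + ‖egrad A x₀‖ ^ 2 / (2 * b * (u x₀) ^ 2)
      - 2 * b * A x₀ / u x₀ - elap A x₀ / u x₀
      = (A x₀ * (u x₀)⁻¹) ^ 2 + (∑ j, (epd j A x₀) ^ 2) * (2 * b * u x₀ ^ 2)⁻¹
        - 2 * b * (A x₀ * (u x₀)⁻¹) - elap A x₀ * (u x₀)⁻¹ := by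
    rw [hegradA]
    ring
  -- conclusion
  rw [hQQ']
  have hx' : Q' x ≤ Q' x₀ := hmax x
  by_cases hqsgn : Q' x₀ ≤ 0
  · exact le_trans (le_trans hx' hqsgn)
      (le_trans (Real.sqrt_nonneg _) (le_max_right _ _))
  · push_neg at hqsgn
    have hM1' : b - A x₀ * (u x₀)⁻¹ ≤ M1 := by
      rw [← div_eq_mul_inv]; exact hM1
    have hM1q : 2 * (b - A x₀ * (u x₀)⁻¹) * Q' x₀ ≤ 2 * M1 * Q' x₀ := by
      have h := mul_le_mul_of_nonneg_right hM1' (le_of_lt hqsgn)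
      linarith
    have h2 : 2 * (Q' x₀) ^ 2 / n ≤ S + 2 * M1 * Q' x₀ := by
      have hbr2 : (A x₀ * (u x₀)⁻¹) ^ 2 + (∑ j, (epd j A x₀) ^ 2) * (2 * b * u x₀ ^ 2)⁻¹
          - 2 * b * (A x₀ * (u x₀)⁻¹) - elap A x₀ * (u x₀)⁻¹ ≤ S := by
        rw [← hconv]; exact hS_br
      linarith [hfinal, hbr2, hM1q]
    by_cases hcase : Q' x₀ ≤ 2 * n * M1
    · exact le_trans hx' (le_trans hcase (le_max_left _ _))
    · push_neg at hcase
      have hA1 : 2 * (Q' x₀) ^ 2 ≤ (S + 2 * M1 * Q' x₀) * n := (div_le_iff₀ hn0).mp h2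
      have hprod : (2 * n * M1) * Q' x₀ < Q' x₀ * Q' x₀ :=
        mul_lt_mul_of_pos_right hcase hqsgn
      have hq2 : (Q' x₀) ^ 2 ≤ n * S := by nlinarith [hA1, hprod]
      have hsqrt : Q' x₀ ≤ Real.sqrt (n * S) := (Real.le_sqrt' hqsgn).mpr hq2
      exact le_trans hx' (le_trans hsqrt (le_max_right _ _))
end

section
/- Let n ≥ 1 and a > 1, let u, A : ℝ × ℝⁿ → ℝ be smooth with u > 0 everywhere, suppose ∂ₜu = Δu + A on ℝ × ℝⁿ, set w := log ∘ u and, for t > 0, F(t,x) := t·( ‖∇w(t,x)‖² + a·A(t,x)/u(t,x) − a·∂ₜw(t,x) ). Then for all t > 0 and x ∈ ℝⁿ: (∂ₜ − Δ)F = F/t + 2t·⟨∇w, ∇( F/t + (1−a)·A·u⁻¹ )⟩ − 2t·‖D²w‖² − a·t·Δ(A·u⁻¹). -/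
open scoped BigOperators

/-- Spatial gradient of `f : ℝ × ℝⁿ → ℝ` at fixed time `t`. -/
noncomputable def sgrad {n : ℕ} (f : ℝ × EuclideanSpace ℝ (Fin n) → ℝ) (t : ℝ)
    (x : EuclideanSpace ℝ (Fin n)) : EuclideanSpace ℝ (Fin n) := egrad (fun y => f (t, y)) x

/-- Spatial Laplacian of `f : ℝ × ℝⁿ → ℝ` at fixed time `t`. -/
noncomputable def slap {n : ℕ} (f : ℝ × EuclideanSpace ℝ (Fin n) → ℝ) (t : ℝ)
    (x : EuclideanSpace ℝ (Fin n)) : ℝ := elap (fun y => f (t, y)) x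

/-- Squared Hilbert–Schmidt norm of the spatial Hessian of `f : ℝ × ℝⁿ → ℝ`. -/
noncomputable def shess2 {n : ℕ} (f : ℝ × EuclideanSpace ℝ (Fin n) → ℝ) (t : ℝ)
    (x : EuclideanSpace ℝ (Fin n)) : ℝ := ehess2 (fun y => f (t, y)) x

/-- Time derivative `∂ₜ f` of `f : ℝ × ℝⁿ → ℝ`. -/
noncomputable def pdt {n : ℕ} (f : ℝ × EuclideanSpace ℝ (Fin n) → ℝ) (t : ℝ)
    (x : EuclideanSpace ℝ (Fin n)) : ℝ := deriv (fun s => f (s, x)) t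

/-! Toolkit -/

noncomputable def Pd {n : ℕ} (v : ℝ × EuclideanSpace ℝ (Fin n))
    (f : ℝ × EuclideanSpace ℝ (Fin n) → ℝ) : ℝ × EuclideanSpace ℝ (Fin n) → ℝ :=
  fun p => fderiv ℝ f p v

noncomputable def eV {n : ℕ} (i : Fin n) : ℝ × EuclideanSpace ℝ (Fin n) :=
  (0, EuclideanSpace.single i 1)
noncomputable def tV {n : ℕ} : ℝ × EuclideanSpace ℝ (Fin n) := (1, 0)

section Toolkit
variable {n : ℕ} {f g : ℝ × EuclideanSpace ℝ (Fin n) → ℝ}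
  {p v v' : ℝ × EuclideanSpace ℝ (Fin n)}

theorem Pd_contDiff (hf : ContDiff ℝ (⊤ : ℕ∞) f) (v : ℝ × EuclideanSpace ℝ (Fin n)) :
    ContDiff ℝ (⊤ : ℕ∞) (Pd v f) := by
  unfold Pd
  exact (hf.fderiv_right (by simp)).clm_apply contDiff_const

theorem ContDiff.dAt (hf : ContDiff ℝ (⊤ : ℕ∞) f) : DifferentiableAt ℝ f p :=
  (hf.differentiable (by simp)).differentiableAt

theorem Pd_comm (hf : ContDiff ℝ (⊤ : ℕ∞) f) (v v' p : ℝ × EuclideanSpace ℝ (Fin n)) :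
    Pd v (Pd v' f) p = Pd v' (Pd v f) p := by
  have hsymm : IsSymmSndFDerivAt ℝ f p := hf.contDiffAt.isSymmSndFDerivAt (by simp [minSmoothness_of_isRCLikeNormedField]; exact WithTop.coe_le_coe.mpr (le_top : (2 : ℕ∞) ≤ ⊤))
  have hd : DifferentiableAt ℝ (fderiv ℝ f) p :=
    ((hf.fderiv_right (m := (⊤ : ℕ∞)) (by simp)).differentiable (by simp)).differentiableAt
  have h1 : ∀ z z' : ℝ × EuclideanSpace ℝ (Fin n),
      Pd z (Pd z' f) p = fderiv ℝ (fderiv ℝ f) p z z' := by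
    intro z z'
    have heq : fderiv ℝ (fun q => (fderiv ℝ f q) z') p
        = (fderiv ℝ f p).comp (fderiv ℝ (fun _ : ℝ × EuclideanSpace ℝ (Fin n) => z') p)
          + (fderiv ℝ (fderiv ℝ f) p).flip z' :=
      fderiv_clm_apply hd (differentiableAt_const z')
    show (fderiv ℝ (fun q => (fderiv ℝ f q) z') p) z = _
    rw [heq]; simp
  rw [h1, h1, hsymm.eq]

theorem Pd_add (hf : DifferentiableAt ℝ f p) (hg : DifferentiableAt ℝ g p) :
    Pd v (fun q => f q + g q) p = Pd v f p + Pd v g p := by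
  show (fderiv ℝ (fun q => f q + g q) p) v = _
  rw [fderiv_fun_add hf hg]; rfl

theorem Pd_sub (hf : DifferentiableAt ℝ f p) (hg : DifferentiableAt ℝ g p) :
    Pd v (fun q => f q - g q) p = Pd v f p - Pd v g p := by
  show (fderiv ℝ (fun q => f q - g q) p) v = _
  rw [fderiv_fun_sub hf hg]; rfl

theorem Pd_mul (hf : DifferentiableAt ℝ f p) (hg : DifferentiableAt ℝ g p) :
    Pd v (fun q => f q * g q) p = Pd v f p * g p + f p * Pd v g p := by
  show (fderiv ℝ (fun q => f q * g q) p) v = _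
  rw [fderiv_fun_mul hf hg]; simp [Pd]; ring

theorem Pd_const_mul (hf : DifferentiableAt ℝ f p) (c : ℝ) :
    Pd v (fun q => c * f q) p = c * Pd v f p := by
  show (fderiv ℝ (fun q => c * f q) p) v = _
  rw [fderiv_const_mul hf c]; rfl

theorem Pd_sq (hf : DifferentiableAt ℝ f p) :
    Pd v (fun q => f q ^ 2) p = 2 * f p * Pd v f p := by
  have h : Pd v (fun q => f q * f q) p = Pd v f p * f p + f p * Pd v f p := Pd_mul hf hf
  have : (fun q => f q ^ 2) = fun q => f q * f q := by funext q; ring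
  rw [this, h]; ring

theorem Pd_sum {ι : Type*} {s : Finset ι} {F : ι → ℝ × EuclideanSpace ℝ (Fin n) → ℝ}
    (hF : ∀ i ∈ s, DifferentiableAt ℝ (F i) p) :
    Pd v (fun q => ∑ i ∈ s, F i q) p = ∑ i ∈ s, Pd v (F i) p := by
  show (fderiv ℝ (fun q => ∑ i ∈ s, F i q) p) v = _
  rw [fderiv_fun_sum hF]; simp [Pd]

theorem Pd_inv (hf : DifferentiableAt ℝ f p) (h0 : f p ≠ 0) :
    Pd v (fun q => (f q)⁻¹) p = -Pd v f p / f p ^ 2 := by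
  have h := (hasDerivAt_inv h0).comp_hasFDerivAt p hf.hasFDerivAt
  show (fderiv ℝ (fun q => (f q)⁻¹) p) v = _
  rw [show (fun q => (f q)⁻¹) = (fun y => y⁻¹) ∘ f from rfl, h.fderiv]
  simp [Pd]
  ring

theorem Pd_log (hf : DifferentiableAt ℝ f p) (h0 : f p ≠ 0) :
    Pd v (fun q => Real.log (f q)) p = Pd v f p / f p := by
  have h := (Real.hasDerivAt_log h0).comp_hasFDerivAt p hf.hasFDerivAt
  show (fderiv ℝ (fun q => Real.log (f q)) p) v = _
  rw [(by rfl : (fun q => Real.log (f q)) = Real.log ∘ f), h.fderiv]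
  simp [Pd, div_eq_inv_mul]

theorem Pd_fst : Pd v (fun q : ℝ × EuclideanSpace ℝ (Fin n) => q.1) p = v.1 := by
  show (fderiv ℝ (fun q : ℝ × EuclideanSpace ℝ (Fin n) => q.1) p) v = v.1
  rw [fderiv_fst]; rfl

/-! Slicing -/

theorem epd_slice (hf : DifferentiableAt ℝ f (t, x)) (i : Fin n) :
    epd i (fun y => f (t, y)) x = Pd (eV i) f (t, x) := by
  have hι : HasFDerivAt (fun y : EuclideanSpace ℝ (Fin n) => ((t : ℝ), y))
      (((0 : EuclideanSpace ℝ (Fin n) →L[ℝ] ℝ)).prod (ContinuousLinearMap.id ℝ _)) x :=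
    (hasFDerivAt_const t x).prodMk (hasFDerivAt_id x)
  have h := hf.hasFDerivAt.comp x hι
  show (fderiv ℝ (fun y => f (t, y)) x) (EuclideanSpace.single i 1) = _
  rw [(by rfl : (fun y => f (t, y)) = f ∘ (fun y : EuclideanSpace ℝ (Fin n) => ((t : ℝ), y))),
    h.fderiv]
  simp [Pd, eV]

theorem pdt_slice (hf : DifferentiableAt ℝ f (t, x)) :
    pdt f t x = Pd tV f (t, x) := by
  have hι : HasDerivAt (fun s : ℝ => (s, x)) ((1 : ℝ), (0 : EuclideanSpace ℝ (Fin n))) t :=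
    (hasDerivAt_id t).prodMk (hasDerivAt_const t x)
  have h := hf.hasFDerivAt.comp_hasDerivAt t hι
  show deriv (fun s => f (s, x)) t = _
  rw [show (fun s => f (s, x)) = f ∘ (fun s : ℝ => (s, x)) from rfl, h.deriv]; rfl

end Toolkit

section Grad
variable {n : ℕ} {f g : ℝ × EuclideanSpace ℝ (Fin n) → ℝ} {t : ℝ} {x : EuclideanSpace ℝ (Fin n)}

theorem egrad_coord (φ : EuclideanSpace ℝ (Fin n) → ℝ) (x : EuclideanSpace ℝ (Fin n)) (i : Fin n) :
    egrad φ x i = epd i φ x := by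
  have h1 : egrad φ x i = (inner ℝ (egrad φ x) (EuclideanSpace.single i (1:ℝ)) : ℝ) := by
    rw [real_inner_comm]
    simp [EuclideanSpace.inner_single_left]
  rw [h1]
  show (inner ℝ ((InnerProductSpace.toDual ℝ _).symm (fderiv ℝ φ x))
    (EuclideanSpace.single i (1:ℝ)) : ℝ) = _
  rw [InnerProductSpace.toDual_symm_apply]; rfl

theorem inner_egrad (φ ψ : EuclideanSpace ℝ (Fin n) → ℝ) (x : EuclideanSpace ℝ (Fin n)) :
    (inner ℝ (egrad φ x) (egrad ψ x) : ℝ) = ∑ i, epd i φ x * epd i ψ x := by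
  rw [PiLp.inner_apply]
  refine Finset.sum_congr rfl fun i _ => ?_
  rw [egrad_coord, egrad_coord]
  simp [RCLike.inner_apply, mul_comm]

theorem norm_egrad (φ : EuclideanSpace ℝ (Fin n) → ℝ) (x : EuclideanSpace ℝ (Fin n)) :
    ‖egrad φ x‖ ^ 2 = ∑ i, (epd i φ x) ^ 2 := by
  rw [← real_inner_self_eq_norm_sq, inner_egrad]
  exact Finset.sum_congr rfl fun i _ => (sq (epd i φ x)).symm

theorem inner_sgrad (hf : ContDiff ℝ (⊤ : ℕ∞) f) (hg : ContDiff ℝ (⊤ : ℕ∞) g)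
    (t : ℝ) (x : EuclideanSpace ℝ (Fin n)) :
    (inner ℝ (sgrad f t x) (sgrad g t x) : ℝ)
      = ∑ i, Pd (eV i) f (t, x) * Pd (eV i) g (t, x) := by
  show (inner ℝ (egrad (fun y => f (t, y)) x) (egrad (fun y => g (t, y)) x) : ℝ) = _
  rw [inner_egrad]
  exact Finset.sum_congr rfl fun i _ => by rw [epd_slice hf.dAt i, epd_slice hg.dAt i]

theorem norm_sgrad (hf : ContDiff ℝ (⊤ : ℕ∞) f) (t : ℝ) (x : EuclideanSpace ℝ (Fin n)) :
    ‖sgrad f t x‖ ^ 2 = ∑ i, (Pd (eV i) f (t, x)) ^ 2 := by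
  show ‖egrad (fun y => f (t, y)) x‖ ^ 2 = _
  rw [norm_egrad]
  exact Finset.sum_congr rfl fun i _ => by rw [epd_slice hf.dAt i]

theorem slap_eq (hf : ContDiff ℝ (⊤ : ℕ∞) f) (t : ℝ) (x : EuclideanSpace ℝ (Fin n)) :
    slap f t x = ∑ i, Pd (eV i) (Pd (eV i) f) (t, x) := by
  show elap (fun y => f (t, y)) x = _
  unfold elap
  refine Finset.sum_congr rfl fun i _ => ?_
  have h1 : (epd i fun y => f (t, y)) = fun y => Pd (eV i) f (t, y) :=
    funext fun y => epd_slice hf.dAt i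
  rw [h1, epd_slice (Pd_contDiff hf (eV i)).dAt i]

theorem shess2_eq (hf : ContDiff ℝ (⊤ : ℕ∞) f) (t : ℝ) (x : EuclideanSpace ℝ (Fin n)) :
    shess2 f t x = ∑ i, ∑ j, (Pd (eV i) (Pd (eV j) f) (t, x)) ^ 2 := by
  show ehess2 (fun y => f (t, y)) x = _
  unfold ehess2
  refine Finset.sum_congr rfl fun i _ => Finset.sum_congr rfl fun j _ => ?_
  have h1 : (epd j fun y => f (t, y)) = fun y => Pd (eV j) f (t, y) :=
    funext fun y => epd_slice hf.dAt j
  rw [h1, epd_slice (Pd_contDiff hf (eV j)).dAt i]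

end Grad

/-- Evolution equation for the Li–Yau-type Harnack quantity
`F = t(‖∇w‖² + aA/u − a∂ₜw)`, `a > 1`, where `u > 0` solves `∂ₜu = Δu + A` and
`w = log u`: for `t > 0`,
`(∂ₜ − Δ)F = F/t + 2t⟨∇w, ∇(F/t + (1−a)A·u⁻¹)⟩ − 2t‖D²w‖² − atΔ(A·u⁻¹)`. -/
theorem harnack_F_evolution (n : ℕ) (hn : 1 ≤ n) (a : ℝ) (ha : 1 < a)
    (u A : ℝ × EuclideanSpace ℝ (Fin n) → ℝ)
    (hu : ContDiff ℝ (⊤ : ℕ∞) u) (hA : ContDiff ℝ (⊤ : ℕ∞) A)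
    (hpos : ∀ p, 0 < u p)
    (hheat : ∀ t x, pdt u t x = slap u t x + A (t, x))
    (w : ℝ × EuclideanSpace ℝ (Fin n) → ℝ) (hw : w = Real.log ∘ u)
    (F : ℝ × EuclideanSpace ℝ (Fin n) → ℝ)
    (hF : F = fun p => p.1 * (‖sgrad w p.1 p.2‖ ^ 2 + a * A p / u p
      - a * pdt w p.1 p.2)) :
    ∀ t, 0 < t → ∀ x,
      pdt F t x - slap F t x
        = F (t, x) / t
          + 2 * t * (inner ℝ (sgrad w t x)
              (sgrad (fun p => F p / p.1 + (1 - a) * (A p / u p)) t x) : ℝ)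
          - 2 * t * shess2 w t x
          - a * t * slap (fun p => A p / u p) t x := by
  have hune : ∀ p, u p ≠ 0 := fun p => (hpos p).ne'
  have hwC : ContDiff ℝ (⊤ : ℕ∞) w := by rw [hw]; exact hu.log hune
  set hh : ℝ × EuclideanSpace ℝ (Fin n) → ℝ := fun p => A p / u p with hhdef
  set S : ℝ × EuclideanSpace ℝ (Fin n) → ℝ := fun p => ∑ i, (Pd (eV i) w p) ^ 2 with hSdef
  set L : ℝ × EuclideanSpace ℝ (Fin n) → ℝ := fun p => ∑ i, Pd (eV i) (Pd (eV i) w) p with hLdef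
  set G : ℝ × EuclideanSpace ℝ (Fin n) → ℝ := fun p => (1 - a) * S p - a * L p with hGdef
  have hhC : ContDiff ℝ (⊤ : ℕ∞) hh := hA.div hu hune
  have hWC : ∀ i, ContDiff ℝ (⊤ : ℕ∞) (Pd (eV i) w) := fun i => Pd_contDiff hwC _
  have hSC : ContDiff ℝ (⊤ : ℕ∞) S := by rw [hSdef]; exact ContDiff.sum fun i _ => (hWC i).pow 2
  have hLC : ContDiff ℝ (⊤ : ℕ∞) L := by
    rw [hLdef]; exact ContDiff.sum fun i _ => Pd_contDiff (hWC i) _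
  have hGC : ContDiff ℝ (⊤ : ℕ∞) G := by
    rw [hGdef]; exact (contDiff_const.mul hSC).sub (contDiff_const.mul hLC)
  -- log derivative of w
  have hWfun : ∀ v : ℝ × EuclideanSpace ℝ (Fin n),
      Pd v w = fun p => Pd v u p * (u p)⁻¹ := by
    intro v; funext p
    rw [hw]
    have : Pd v (fun q => Real.log (u q)) p = Pd v u p / u p := Pd_log hu.dAt (hune p)
    rw [show (Real.log ∘ u) = fun q => Real.log (u q) from rfl, this, div_eq_mul_inv]
  -- the PDE for w
  have hPDEp : ∀ p : ℝ × EuclideanSpace ℝ (Fin n), Pd tV w p = L p + S p + hh p := by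
    intro p
    have hheat' : Pd tV u p = (∑ i, Pd (eV i) (Pd (eV i) u) p) + A p := by
      have h0 := hheat p.1 p.2
      rwa [pdt_slice hu.dAt, slap_eq hu] at h0
    have hLi : ∀ i, Pd (eV i) (Pd (eV i) w) p
        = Pd (eV i) (Pd (eV i) u) p * (u p)⁻¹
          + Pd (eV i) u p * (-Pd (eV i) u p / u p ^ 2) := by
      intro i
      rw [hWfun (eV i)]
      rw [Pd_mul (Pd_contDiff hu _).dAt (hu.dAt.fun_inv (hune p)), Pd_inv hu.dAt (hune p)]
    rw [hWfun tV]
    show Pd tV u p * (u p)⁻¹ = L p + S p + hh p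
    have hLp : L p = ∑ i, Pd (eV i) (Pd (eV i) w) p := by rw [hLdef]
    have hSp : S p = ∑ i, (Pd (eV i) w p) ^ 2 := by rw [hSdef]
    have hhp : hh p = A p / u p := by rw [hhdef]
    rw [hheat', hLp, hSp, hhp]
    have hSi : ∀ i, (Pd (eV i) w p) ^ 2 = (Pd (eV i) u p * (u p)⁻¹) ^ 2 := by
      intro i; rw [hWfun (eV i)]
    calc ((∑ i, Pd (eV i) (Pd (eV i) u) p) + A p) * (u p)⁻¹
        = (∑ i, Pd (eV i) (Pd (eV i) u) p * (u p)⁻¹) + A p * (u p)⁻¹ := by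
          rw [add_mul, Finset.sum_mul]
      _ = (∑ i, (Pd (eV i) (Pd (eV i) u) p * (u p)⁻¹
            + Pd (eV i) u p * (-Pd (eV i) u p / u p ^ 2)
            + (Pd (eV i) u p * (u p)⁻¹) ^ 2)) + A p / u p := by
          rw [div_eq_mul_inv]
          congr 1
          refine Finset.sum_congr rfl fun i _ => ?_
          field_simp
          rw [div_eq_div_iff (hune p) (pow_ne_zero 2 (hune p))]
          ring
      _ = (∑ i, (Pd (eV i) (Pd (eV i) w) p + (Pd (eV i) w p) ^ 2)) + A p / u p := by
          congr 1
          exact Finset.sum_congr rfl fun i _ => by rw [hLi i, hSi i]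
      _ = (∑ i, Pd (eV i) (Pd (eV i) w) p) + (∑ i, (Pd (eV i) w p) ^ 2) + A p / u p := by
          rw [Finset.sum_add_distrib]
  have hPDEfun : Pd tV w = fun p => L p + S p + hh p := funext hPDEp
  -- F = t * G
  have hFfun : F = fun p => p.1 * G p := by
    funext p
    show F p = p.1 * G p
    simp only [hF]
    rw [norm_sgrad hwC p.1 p.2]
    have hSS : (∑ i, (Pd (eV i) w (p.1, p.2)) ^ 2) = S p := by rw [hSdef]
    have hwt : pdt w p.1 p.2 = L p + S p + hh p :=
      (pdt_slice hwC.dAt).trans (hPDEp p)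
    have hGp : G p = (1 - a) * S p - a * L p := by rw [hGdef]
    have hhp : hh p = A p / u p := by rw [hhdef]
    rw [hSS, hwt, hGp, hhp, mul_div_assoc]
    ring
  have hFC : ContDiff ℝ (⊤ : ℕ∞) F := by rw [hFfun]; exact contDiff_fst.mul hGC
  -- derivative expansion lemmas
  have hPSp : ∀ (v p : ℝ × EuclideanSpace ℝ (Fin n)),
      Pd v S p = ∑ i, 2 * Pd (eV i) w p * Pd v (Pd (eV i) w) p := by
    intro v p
    rw [hSdef]
    rw [Pd_sum (fun i _ => ((hWC i).pow 2).dAt)]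
    exact Finset.sum_congr rfl fun i _ => Pd_sq (hWC i).dAt
  have hPLp : ∀ (v p : ℝ × EuclideanSpace ℝ (Fin n)),
      Pd v L p = ∑ i, Pd v (Pd (eV i) (Pd (eV i) w)) p := by
    intro v p
    rw [hLdef]
    exact Pd_sum fun i _ => (Pd_contDiff (hWC i) _).dAt
  have hPGp : ∀ (v p : ℝ × EuclideanSpace ℝ (Fin n)),
      Pd v G p = (1 - a) * Pd v S p - a * Pd v L p := by
    intro v p
    rw [hGdef]
    rw [Pd_sub (contDiff_const.mul hSC).dAt (contDiff_const.mul hLC).dAt,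
      Pd_const_mul hSC.dAt, Pd_const_mul hLC.dAt]
  -- time-space commutation with PDE substitution
  have hTv : ∀ (v p : ℝ × EuclideanSpace ℝ (Fin n)),
      Pd v (Pd tV w) p = Pd v L p + Pd v S p + Pd v hh p := by
    intro v p
    rw [hPDEfun]
    rw [Pd_add (hLC.add hSC).dAt hhC.dAt, Pd_add hLC.dAt hSC.dAt]
  intro t ht x
  -- LHS pieces
  have hPdF : ∀ i, Pd (eV i) F = fun p => p.1 * Pd (eV i) G p := by
    intro i; funext p
    rw [hFfun]
    have hm := Pd_mul (f := fun p : ℝ × EuclideanSpace ℝ (Fin n) => p.1) (g := G)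
      (v := eV i) (p := p) differentiableAt_fst hGC.dAt
    rw [hm, Pd_fst]
    show (eV (n := n) i).1 * G p + p.1 * Pd (eV i) G p = p.1 * Pd (eV i) G p
    rw [show (eV (n := n) i).1 = 0 from rfl]
    ring
  have h1 : pdt F t x = G (t, x) + t * Pd tV G (t, x) := by
    rw [pdt_slice hFC.dAt, hFfun]
    have hm := Pd_mul (f := fun p : ℝ × EuclideanSpace ℝ (Fin n) => p.1) (g := G)
      (v := tV) (p := ((t : ℝ), x)) differentiableAt_fst hGC.dAt
    rw [hm, Pd_fst]
    show (tV (n := n)).1 * G (t, x) + t * Pd tV G (t, x) = _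
    rw [show (tV (n := n)).1 = 1 from rfl]
    ring
  have h2 : slap F t x = t * ∑ i, Pd (eV i) (Pd (eV i) G) (t, x) := by
    rw [slap_eq hFC, Finset.mul_sum]
    refine Finset.sum_congr rfl fun i _ => ?_
    rw [hPdF i]
    have hm := Pd_mul (f := fun p : ℝ × EuclideanSpace ℝ (Fin n) => p.1) (g := Pd (eV i) G)
      (v := eV i) (p := ((t : ℝ), x)) differentiableAt_fst (Pd_contDiff hGC _).dAt
    rw [hm, Pd_fst]
    show (eV (n := n) i).1 * Pd (eV i) G (t, x) + t * Pd (eV i) (Pd (eV i) G) (t, x) = _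
    rw [show (eV (n := n) i).1 = 0 from rfl]
    ring
  -- RHS pieces
  have h3 : F (t, x) / t = G (t, x) := by
    rw [hFfun]; exact mul_div_cancel_left₀ _ ht.ne'
  have h4 : sgrad (fun p => F p / p.1 + (1 - a) * (A p / u p)) t x
      = sgrad (fun p => G p + (1 - a) * hh p) t x := by
    show egrad (fun y : EuclideanSpace ℝ (Fin n) =>
        F (t, y) / (t, y).1 + (1 - a) * (A (t, y) / u (t, y))) x
      = egrad (fun y : EuclideanSpace ℝ (Fin n) => G (t, y) + (1 - a) * hh (t, y)) x
    have hfe : (fun y : EuclideanSpace ℝ (Fin n) =>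
        F (t, y) / (t, y).1 + (1 - a) * (A (t, y) / u (t, y)))
        = (fun y : EuclideanSpace ℝ (Fin n) => G (t, y) + (1 - a) * hh (t, y)) := by
      funext y
      rw [hFfun]
      show t * G (t, y) / t + (1 - a) * (A (t, y) / u (t, y)) = _
      rw [mul_div_cancel_left₀ _ ht.ne']
    rw [hfe]
  have hΨC : ContDiff ℝ (⊤ : ℕ∞) (fun p => G p + (1 - a) * hh p) :=
    hGC.add (contDiff_const.mul hhC)
  have h7 : (inner ℝ (sgrad w t x) (sgrad (fun p => G p + (1 - a) * hh p) t x) : ℝ)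
      = ∑ i, Pd (eV i) w (t, x)
          * (Pd (eV i) G (t, x) + (1 - a) * Pd (eV i) hh (t, x)) := by
    rw [inner_sgrad hwC hΨC t x]
    refine Finset.sum_congr rfl fun i _ => ?_
    rw [Pd_add hGC.dAt (contDiff_const.mul hhC).dAt, Pd_const_mul hhC.dAt]
  have h5 := shess2_eq hwC t x
  have h6 := slap_eq hhC t x
  -- expansion of the evolution of S, L, G
  have hTS : Pd tV S (t, x) = 2 * (∑ i, Pd (eV i) w (t, x) * Pd (eV i) L (t, x))
      + 2 * (∑ i, Pd (eV i) w (t, x) * Pd (eV i) S (t, x))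
      + 2 * (∑ i, Pd (eV i) w (t, x) * Pd (eV i) hh (t, x)) := by
    calc Pd tV S (t, x) = ∑ i, 2 * Pd (eV i) w (t, x) * Pd tV (Pd (eV i) w) (t, x) :=
          hPSp tV (t, x)
      _ = ∑ i, (2 * (Pd (eV i) w (t, x) * Pd (eV i) L (t, x))
            + 2 * (Pd (eV i) w (t, x) * Pd (eV i) S (t, x))
            + 2 * (Pd (eV i) w (t, x) * Pd (eV i) hh (t, x))) := by
          refine Finset.sum_congr rfl fun i _ => ?_
          rw [Pd_comm hwC tV (eV i), hTv (eV i)]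
          ring
      _ = _ := by
          rw [Finset.sum_add_distrib, Finset.sum_add_distrib,
            ← Finset.mul_sum, ← Finset.mul_sum, ← Finset.mul_sum]
  have hTL : Pd tV L (t, x) = (∑ i, Pd (eV i) (Pd (eV i) L) (t, x))
      + (∑ i, Pd (eV i) (Pd (eV i) S) (t, x))
      + (∑ i, Pd (eV i) (Pd (eV i) hh) (t, x)) := by
    calc Pd tV L (t, x) = ∑ i, Pd tV (Pd (eV i) (Pd (eV i) w)) (t, x) := hPLp tV (t, x)
      _ = ∑ i, (Pd (eV i) (Pd (eV i) L) (t, x) + Pd (eV i) (Pd (eV i) S) (t, x)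
            + Pd (eV i) (Pd (eV i) hh) (t, x)) := by
          refine Finset.sum_congr rfl fun i _ => ?_
          rw [Pd_comm (hWC i) tV (eV i)]
          have hfun : Pd tV (Pd (eV i) w)
              = fun p => Pd (eV i) L p + Pd (eV i) S p + Pd (eV i) hh p := by
            funext p; rw [Pd_comm hwC tV (eV i), hTv (eV i)]
          rw [hfun]
          rw [Pd_add ((Pd_contDiff hLC _).add (Pd_contDiff hSC _)).dAt (Pd_contDiff hhC _).dAt,
            Pd_add (Pd_contDiff hLC _).dAt (Pd_contDiff hSC _).dAt]
      _ = _ := by rw [Finset.sum_add_distrib, Finset.sum_add_distrib]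
  have hDG : ∑ i, Pd (eV i) (Pd (eV i) G) (t, x)
      = (1 - a) * (∑ i, Pd (eV i) (Pd (eV i) S) (t, x))
        - a * (∑ i, Pd (eV i) (Pd (eV i) L) (t, x)) := by
    calc ∑ i, Pd (eV i) (Pd (eV i) G) (t, x)
        = ∑ i, ((1 - a) * Pd (eV i) (Pd (eV i) S) (t, x)
            - a * Pd (eV i) (Pd (eV i) L) (t, x)) := by
          refine Finset.sum_congr rfl fun i _ => ?_
          have hfun : Pd (eV i) G = fun p => (1 - a) * Pd (eV i) S p - a * Pd (eV i) L p :=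
            funext fun p => hPGp (eV i) p
          rw [hfun, Pd_sub (contDiff_const.mul (Pd_contDiff hSC _)).dAt
              (contDiff_const.mul (Pd_contDiff hLC _)).dAt,
            Pd_const_mul (Pd_contDiff hSC _).dAt, Pd_const_mul (Pd_contDiff hLC _).dAt]
      _ = _ := by rw [Finset.sum_sub_distrib, ← Finset.mul_sum, ← Finset.mul_sum]
  have hsum3 : ∀ j, (∑ i, Pd (eV i) (Pd (eV i) (Pd (eV j) w)) (t, x)) = Pd (eV j) L (t, x) := by
    intro j
    rw [hPLp (eV j)]
    refine Finset.sum_congr rfl fun i _ => ?_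
    have e1 : Pd (eV i) (Pd (eV j) w) = Pd (eV j) (Pd (eV i) w) :=
      funext fun p => Pd_comm hwC (eV i) (eV j) p
    calc Pd (eV i) (Pd (eV i) (Pd (eV j) w)) (t, x)
        = Pd (eV i) (Pd (eV j) (Pd (eV i) w)) (t, x) := by rw [e1]
      _ = Pd (eV j) (Pd (eV i) (Pd (eV i) w)) (t, x) := Pd_comm (hWC i) (eV i) (eV j) (t, x)
  have hDS : (∑ i, Pd (eV i) (Pd (eV i) S) (t, x))
      = 2 * (∑ i, ∑ j, (Pd (eV i) (Pd (eV j) w) (t, x)) ^ 2)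
        + 2 * (∑ i, Pd (eV i) w (t, x) * Pd (eV i) L (t, x)) := by
    calc (∑ i, Pd (eV i) (Pd (eV i) S) (t, x))
        = ∑ i, ∑ j, (2 * Pd (eV i) (Pd (eV j) w) (t, x) * Pd (eV i) (Pd (eV j) w) (t, x)
            + 2 * Pd (eV j) w (t, x) * Pd (eV i) (Pd (eV i) (Pd (eV j) w)) (t, x)) := by
          refine Finset.sum_congr rfl fun i _ => ?_
          have hfun : Pd (eV i) S
              = fun p => ∑ j, 2 * Pd (eV j) w p * Pd (eV i) (Pd (eV j) w) p :=
            funext fun p => hPSp (eV i) p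
          rw [hfun, Pd_sum (fun j _ =>
            ((contDiff_const.mul (hWC j)).mul (Pd_contDiff (hWC j) _)).dAt)]
          refine Finset.sum_congr rfl fun j _ => ?_
          have hm := Pd_mul (f := fun p => 2 * Pd (eV j) w p)
            (g := Pd (eV i) (Pd (eV j) w)) (v := eV i) (p := ((t : ℝ), x))
            (contDiff_const.mul (hWC j)).dAt (Pd_contDiff (hWC j) _).dAt
          rw [hm, Pd_const_mul (hWC j).dAt]
      _ = (∑ i, ∑ j, 2 * Pd (eV i) (Pd (eV j) w) (t, x) * Pd (eV i) (Pd (eV j) w) (t, x))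
          + ∑ i, ∑ j, 2 * Pd (eV j) w (t, x) * Pd (eV i) (Pd (eV i) (Pd (eV j) w)) (t, x) := by
          simp only [Finset.sum_add_distrib]
      _ = _ := by
          congr 1
          · rw [Finset.mul_sum]
            refine Finset.sum_congr rfl fun i _ => ?_
            rw [Finset.mul_sum]
            exact Finset.sum_congr rfl fun j _ => by ring
          · rw [Finset.sum_comm, Finset.mul_sum]
            refine Finset.sum_congr rfl fun j _ => ?_
            rw [← Finset.mul_sum, hsum3 j]
            ring
  have hIlin : (∑ i, Pd (eV i) w (t, x)
        * (Pd (eV i) G (t, x) + (1 - a) * Pd (eV i) hh (t, x)))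
      = (1 - a) * (∑ i, Pd (eV i) w (t, x) * Pd (eV i) S (t, x))
        - a * (∑ i, Pd (eV i) w (t, x) * Pd (eV i) L (t, x))
        + (1 - a) * (∑ i, Pd (eV i) w (t, x) * Pd (eV i) hh (t, x)) := by
    calc (∑ i, Pd (eV i) w (t, x) * (Pd (eV i) G (t, x) + (1 - a) * Pd (eV i) hh (t, x)))
        = ∑ i, ((1 - a) * (Pd (eV i) w (t, x) * Pd (eV i) S (t, x))
            - a * (Pd (eV i) w (t, x) * Pd (eV i) L (t, x))
            + (1 - a) * (Pd (eV i) w (t, x) * Pd (eV i) hh (t, x))) := by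
          refine Finset.sum_congr rfl fun i _ => ?_
          rw [hPGp (eV i)]
          ring
      _ = _ := by
          rw [Finset.sum_add_distrib, Finset.sum_sub_distrib,
            ← Finset.mul_sum, ← Finset.mul_sum, ← Finset.mul_sum]
  -- assemble
  rw [h1, h2, h3, h4, h7, h5, h6, hPGp tV, hTS, hTL, hDG, hIlin, hDS]
  ring
end
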